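/- Let a, b ∈ ℝ with a < b, α > 0, m = α(b−a)/4, g(x) = (4/(b−a)²)·(x − (a+b)/2)², and for an integer k ≥ 1 define J_k(x) = x + (m/k)·g(x)^k. Then J_k has a unique global minimizer on ℝ, given explicitly by x_k* = (a+b)/2 − α^{−1/(2k−1)}·(b−a)/2; consequently a − x_k* = −(b−a)/2·(1 − α^{−1/(2k−1)}), which tends to 0 as k → ∞. -/
import Mathlib


/-- The one-dimensional constraint function `g(x) = (4/(b−a)²)(x − (a+b)/2)²`. -/
noncomputable def gOne (a b : ℝ) (x : ℝ) : ℝ := 4 / (b - a) ^ 2 * (x - (a + b) / 2) ^ 2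

/-- The one-dimensional auxiliary cost `J_k(x) = x + (m/k)·g(x)^k` with `m = α(b−a)/4`. -/
noncomputable def JOne (a b α : ℝ) (k : ℕ) (x : ℝ) : ℝ :=
  x + (α * (b - a) / 4 / (k : ℝ)) * (gOne a b x) ^ k

/-- The explicit minimizer `x_k* = (a+b)/2 − α^{−1/(2k−1)}·(b−a)/2` of `J_k`. -/
noncomputable def xkStar (a b α : ℝ) (k : ℕ) : ℝ :=
  (a + b) / 2 - α ^ (-(1 / (2 * (k : ℝ) - 1))) * ((b - a) / 2)
open Filter Real Set

lemma aux_min (a b α : ℝ) (hab : a < b) (hα : 0 < α) (k : ℕ) (hk : 1 ≤ k) :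
    (∀ x : ℝ, JOne a b α k (xkStar a b α k) ≤ JOne a b α k x) ∧
    (∀ y : ℝ, (∀ x : ℝ, JOne a b α k y ≤ JOne a b α k x) → y = xkStar a b α k) := by
  have hba : (0:ℝ) < b - a := sub_pos.2 hab
  have hba' : (b - a) ≠ 0 := ne_of_gt hba
  have hk0 : (0:ℝ) < (k:ℝ) := by exact_mod_cast hk
  set n : ℕ := 2 * k - 1 with hn
  have h2k : 2 * k = n + 1 := by omega
  have hodd : Odd n := ⟨k - 1, by omega⟩
  have hnR : (n:ℝ) = 2 * (k:ℝ) - 1 := by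
    have : ((2*k : ℕ) : ℝ) = ((n+1 : ℕ) : ℝ) := by rw [h2k]
    push_cast at this; linarith
  have hnR0 : (n:ℝ) ≠ 0 := by
    have : (1:ℕ) ≤ n := by omega
    positivity
  set t : ℝ := -(1 / (2 * (k:ℝ) - 1)) with ht
  set c : ℝ := (a + b) / 2 with hc
  set D : ℝ := α * (b - a) / 4 / (k : ℝ) * (4 / (b - a) ^ 2) ^ k with hD
  set E : ℝ := D * (2 * k : ℝ) with hE
  have hJ : ∀ x, JOne a b α k x = x + D * (x - c) ^ (2 * k) := by
    intro x
    simp only [JOne, gOne, hD, hc]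
    rw [mul_pow, ← pow_mul]
    ring
  have hDpos : 0 < D := by
    apply mul_pos
    · positivity
    · positivity
  have hEpos : 0 < E := by
    apply mul_pos hDpos; positivity
  -- E * ((b-a)/2)^n = α
  have hE1 : E * ((b - a) / 2) ^ n = α := by
    have h4 : ((4:ℝ) / (b-a)^2) ^ k = 2 ^ (n+1) / (b-a)^(n+1) := by
      rw [div_pow, show (4:ℝ) = 2^2 by norm_num, ← pow_mul, ← pow_mul, h2k]
    rw [hE, hD, h4, div_pow]
    have h2n : (2:ℝ)^(n+1) = 2 * 2^n := by rw [pow_succ]; ring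
    have hbn : (b-a)^(n+1) = (b-a) * (b-a)^n := by rw [pow_succ]; ring
    rw [h2n, hbn]
    have hpn : ((b-a):ℝ)^n ≠ 0 := pow_ne_zero _ hba'
    have h2pn : ((2:ℝ))^n ≠ 0 := by positivity
    field_simp
    ring
  -- x* - c
  have hxc : xkStar a b α k - c = -(α ^ t * ((b - a) / 2)) := by
    simp only [xkStar, hc, ht]; ring
  have hαt : (α ^ t) ^ n = α⁻¹ := by
    rw [← Real.rpow_natCast (α ^ t) n, ← Real.rpow_mul hα.le]
    have : t * (n:ℝ) = -1 := by
      rw [ht, hnR.symm]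
      field_simp
    rw [this, Real.rpow_neg_one]
  have hE2 : E * (xkStar a b α k - c) ^ n = -1 := by
    rw [hxc, hodd.neg_pow, mul_pow, hαt]
    have : E * (α⁻¹ * ((b-a)/2)^n) = α⁻¹ * (E * ((b-a)/2)^n) := by ring
    rw [mul_neg, this, hE1, inv_mul_cancel₀ (ne_of_gt hα)]
  -- derivative
  have hderiv : ∀ x : ℝ, HasDerivAt (JOne a b α k) (1 + E * (x - c) ^ n) x := by
    intro x
    have h1 : HasDerivAt (fun x : ℝ => x + D * (x - c) ^ (2*k))
        (1 + D * ((2*k : ℕ) * (x - c) ^ (2*k - 1) * 1)) x := by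
      exact (hasDerivAt_id x).add ((((hasDerivAt_id x).sub_const c).pow (2*k)).const_mul D)
    have heq : (fun x : ℝ => x + D * (x - c) ^ (2*k)) = JOne a b α k := by
      funext x; rw [hJ x]
    rw [heq] at h1
    convert h1 using 2
    rw [hE, hn]
    push_cast
    ring
  have hderiv' : ∀ x : ℝ, deriv (JOne a b α k) x = 1 + E * (x - c) ^ n := fun x =>
    (hderiv x).deriv
  have hcont : Continuous (JOne a b α k) := by
    have : (fun x : ℝ => x + D * (x - c) ^ (2*k)) = JOne a b α k := by
      funext x; rw [hJ x]
    rw [← this]; fun_prop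
  set xs := xkStar a b α k with hxs
  have hmono : StrictMonoOn (JOne a b α k) (Ici xs) := by
    apply strictMonoOn_of_deriv_pos (convex_Ici _) hcont.continuousOn
    intro x hx
    rw [interior_Ici] at hx
    rw [hderiv' x]
    have : (xs - c) ^ n < (x - c) ^ n :=
      hodd.strictMono_pow (by linarith [hx.out] : xs - c < x - c)
    nlinarith [hE2]
  have hanti : StrictAntiOn (JOne a b α k) (Iic xs) := by
    apply strictAntiOn_of_deriv_neg (convex_Iic _) hcont.continuousOn
    intro x hx
    rw [interior_Iic] at hx
    rw [hderiv' x]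
    have : (x - c) ^ n < (xs - c) ^ n :=
      hodd.strictMono_pow (by linarith [hx.out] : x - c < xs - c)
    nlinarith [hE2]
  constructor
  · intro x
    rcases lt_trichotomy x xs with h | h | h
    · exact le_of_lt (hanti (le_of_lt h) Set.self_mem_Iic h)
    · rw [h]
    · exact le_of_lt (hmono Set.self_mem_Ici (le_of_lt h) h)
  · intro y hy
    by_contra hne
    rcases lt_or_gt_of_ne hne with h | h
    · exact absurd (hy xs) (not_le.2 (hanti (le_of_lt h) Set.self_mem_Iic h))
    · exact absurd (hy xs) (not_le.2 (hmono Set.self_mem_Ici (le_of_lt h) h))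

/-- For `a < b`, `α > 0`, `m = α(b−a)/4`, and `k ≥ 1`, the function
`J_k(x) = x + (m/k)·g(x)^k` has the unique global minimizer
`x_k* = (a+b)/2 − α^{−1/(2k−1)}·(b−a)/2`; consequently
`a − x_k* = −(b−a)/2·(1 − α^{−1/(2k−1)})`, which tends to `0` as `k → ∞`. -/
theorem minAB_auxiliary_minimizer (a b α : ℝ) (hab : a < b) (hα : 0 < α) :
    (∀ k : ℕ, 1 ≤ k →
      (∀ x : ℝ, JOne a b α k (xkStar a b α k) ≤ JOne a b α k x) ∧
      (∀ y : ℝ, (∀ x : ℝ, JOne a b α k y ≤ JOne a b α k x) → y = xkStar a b α k) ∧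
      a - xkStar a b α k =
        -((b - a) / 2) * (1 - α ^ (-(1 / (2 * (k : ℝ) - 1))))) ∧
    Filter.Tendsto (fun k : ℕ => a - xkStar a b α k) Filter.atTop (nhds 0) := by
  constructor
  · intro k hk
    obtain ⟨h1, h2⟩ := aux_min a b α hab hα k hk
    refine ⟨h1, h2, ?_⟩
    simp only [xkStar]; ring
  · have ht : Tendsto (fun k : ℕ => -(1 / (2 * (k : ℝ) - 1))) atTop (nhds 0) := by
      rw [show (0:ℝ) = -0 by ring]
      apply Filter.Tendsto.neg
      simp only [one_div]
      apply Filter.Tendsto.inv_tendsto_atTop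
      apply tendsto_atTop_add_const_right
      exact (tendsto_natCast_atTop_atTop (R := ℝ)).const_mul_atTop two_pos
    have hr : Tendsto (fun k : ℕ => α ^ (-(1 / (2 * (k : ℝ) - 1)))) atTop (nhds 1) := by
      have := Filter.Tendsto.rpow (tendsto_const_nhds (x := α) (f := atTop)) ht
        (Or.inl (ne_of_gt hα))
      simpa using this
    have : Tendsto (fun k : ℕ => -((b-a)/2) + α ^ (-(1 / (2 * (k : ℝ) - 1))) * ((b-a)/2))
        atTop (nhds (-((b-a)/2) + 1 * ((b-a)/2))) :=
      tendsto_const_nhds.add (hr.mul tendsto_const_nhds)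
    have heq : (fun k : ℕ => a - xkStar a b α k)
        = fun k : ℕ => -((b-a)/2) + α ^ (-(1 / (2 * (k : ℝ) - 1))) * ((b-a)/2) := by
      funext k; simp only [xkStar]; ring
    rw [heq]
    convert this using 2
    ring
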